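/- Let n ≥ 2, let f be a curvature function, let Ω ⊂ ℝⁿ be a domain, and let u ∈ C^∞(Ω) satisfy u > 0, A[u] positive definite in Ω, and f(κ[u]) = σ in Ω for a constant σ. Define φ(x) = u(x) − x·Du(x). Then φ lies in the kernel of the linearized operator: for every x ∈ Ω, the function t ↦ f(eigenvalues of A[u + tφ](x)) (which is defined for all t in a neighborhood of 0, since u(x)+tφ(x) > 0 and A[u+tφ](x) remains positive definite for small |t|) is differentiable at t = 0 with derivative equal to 0. -/

import Mathlib

open scoped Topology NNReal
open Filter Set

noncomputable section

/-- Euclidean `n`-space. -/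
abbrev En (n : ℕ) := EuclideanSpace ℝ (Fin n)

/-- The positive cone `K⁺ₙ`. -/
def posCone (n : ℕ) : Set (Fin n → ℝ) := {l | ∀ i, 0 < l i}

/-- A curvature function on the positive cone. -/
structure IsCurvatureFunction (n : ℕ) (f : (Fin n → ℝ) → ℝ) : Prop where
  smooth : ContDiffOn ℝ (⊤ : ℕ∞) f (posCone n)
  symm : ∀ (g : Equiv.Perm (Fin n)) (l : Fin n → ℝ), f (l ∘ g) = f l
  pos : ∀ l ∈ posCone n, 0 < f l
  zero_at_boundary : ∀ l₀ ∈ frontier (posCone n), Tendsto f (𝓝[posCone n] l₀) (𝓝 0)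
  deriv_pos : ∀ l ∈ posCone n, ∀ i : Fin n, 0 < fderiv ℝ f l (Pi.single i 1)
  concave : ConcaveOn ℝ (posCone n) f
  normalized : f (fun _ => 1) = 1
  homog : ∀ t : ℝ, 0 ≤ t → ∀ l ∈ posCone n, f (t • l) = t * f l

variable {n : ℕ}

/-- Gradient `Du` (components). -/
def Dg (u : En n → ℝ) (x : En n) : Fin n → ℝ :=
  fun i => fderiv ℝ u x (EuclideanSpace.single i 1)

/-- Hessian matrix `D²u`. -/
def Dh (u : En n → ℝ) (x : En n) : Matrix (Fin n) (Fin n) ℝ :=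
  Matrix.of fun i j =>
    fderiv ℝ (fun y => fderiv ℝ u y (EuclideanSpace.single j 1)) x (EuclideanSpace.single i 1)

/-- `w = √(1+|Du|²)`. -/
def wG (u : En n → ℝ) (x : En n) : ℝ := Real.sqrt (1 + ∑ i, Dg u x i ^ 2)

/-- The matrix `γ = (γ^{ij})`, the inverse square root of `I + Du Duᵀ`. -/
def gammaM (u : En n → ℝ) (x : En n) : Matrix (Fin n) (Fin n) ℝ :=
  1 - (wG u x * (1 + wG u x))⁻¹ • Matrix.of (fun i j => Dg u x i * Dg u x j)

/-- The matrix `A[u]` whose eigenvalues are the hyperbolic principal curvatures of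
the graph of `u`. -/
def hypA (u : En n → ℝ) (x : En n) : Matrix (Fin n) (Fin n) ℝ :=
  (wG u x)⁻¹ • (1 + u x • (gammaM u x * Dh u x * gammaM u x))

open Classical in
/-- Eigenvalues of a (symmetric) real matrix; junk value `0` if not symmetric. -/
def eigenvals {n : ℕ} (A : Matrix (Fin n) (Fin n) ℝ) : Fin n → ℝ :=
  if h : A.IsHermitian then h.eigenvalues else 0

/-- A solution of the asymptotic Plateau problem `f(κ) = σ` over `Ω`. -/
structure IsAPSolution (n : ℕ) (f : (Fin n → ℝ) → ℝ) (Ω : Set (En n)) (σ : ℝ)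
    (u : En n → ℝ) : Prop where
  smooth : ContDiffOn ℝ (⊤ : ℕ∞) u Ω
  cont : ContinuousOn u (closure Ω)
  pos : ∀ x ∈ Ω, 0 < u x
  bd : ∀ x ∈ frontier Ω, u x = 0
  posdef : ∀ x ∈ Ω, (hypA u x).PosDef
  curv_eq : ∀ x ∈ Ω, f (eigenvals (hypA u x)) = σ

/-- Port helper: current instance search fails to find the (norm-induced) edistance on
`K →L[ℝ] K →L[ℝ] ℝ` for a submodule `K`; this supplies the same instance explicitly. -/
instance instPEMetricCLMCLMSubmodule {E : Type*} [NormedAddCommGroup E] [InnerProductSpace ℝ E]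
    (K : Submodule ℝ E) : PseudoEMetricSpace (K →L[ℝ] K →L[ℝ] ℝ) :=
  (ContinuousLinearMap.toNormedAddCommGroup (E := K) (F := K →L[ℝ] ℝ) (𝕜 := ℝ) (𝕜₂ := ℝ)
    (σ₁₂ := RingHom.id ℝ)).toMetricSpace.toPseudoMetricSpace.toPseudoEMetricSpace

section Extras

variable {n : ℕ}

/-- Uniform exterior ball condition with radius `r`. -/
def UnifExtBall (Ω : Set (En n)) (r : ℝ) : Prop :=
  ∀ p ∈ frontier Ω, ∃ c : En n, Metric.ball c r ∩ Ω = ∅ ∧ dist p c = r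

/-- Uniform interior ball condition with radius `r`. -/
def UnifIntBall (Ω : Set (En n)) (r : ℝ) : Prop :=
  ∀ p ∈ frontier Ω, ∃ c : En n, Metric.ball c r ⊆ Ω ∧ dist p c = r

/-- `ν` is the outward unit normal to `∂Ω` at `p`: near `p`, after writing points as
`p + v + tν` with `v` in the tangent hyperplane, `Ω` is the region `t < -φ(v)` for a `C¹`
function `φ` with `φ(0) = 0`, `Dφ(0) = 0`. -/
def IsOutwardNormalAt (Ω : Set (En n)) (p ν : En n) : Prop :=
  ‖ν‖ = 1 ∧ ∃ r : ℝ, 0 < r ∧ ∃ φ : ↥((Submodule.span ℝ {ν})ᗮ) → ℝ,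
    φ 0 = 0 ∧ fderiv ℝ φ 0 = 0 ∧ ContDiffOn ℝ 1 φ (Metric.ball 0 r) ∧
    ∀ y ∈ Metric.ball p r,
      (y ∈ Ω ↔ @inner ℝ _ _ (y - p) ν
          < - φ ((Submodule.orthogonalProjectionOnto ((Submodule.span ℝ {ν})ᗮ)) (y - p)))

/-- `Ω` has `C¹` boundary. -/
def HasC1Boundary (Ω : Set (En n)) : Prop :=
  ∀ p ∈ frontier Ω, ∃ ν : En n, IsOutwardNormalAt Ω p ν

/-- `Ω` has `C²` boundary: near every boundary point `p`, `Ω` is the region above the graph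
of a `C²` function `φ` over the tangent hyperplane, where `ν` is the interior unit normal. -/
def HasC2Boundary (Ω : Set (En n)) : Prop :=
  ∀ p ∈ frontier Ω, ∃ ν : En n, ‖ν‖ = 1 ∧ ∃ r : ℝ, 0 < r ∧
    ∃ φ : ↥((Submodule.span ℝ {ν})ᗮ) → ℝ,
      φ 0 = 0 ∧ fderiv ℝ φ 0 = 0 ∧ ContDiffOn ℝ 2 φ (Metric.ball 0 r) ∧
      ∀ y ∈ Metric.ball p r,
        (y ∈ Ω ↔ φ ((Submodule.orthogonalProjectionOnto ((Submodule.span ℝ {ν})ᗮ)) (y - p))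
            < @inner ℝ _ _ (y - p) ν)

/-- `Ω` has `C^{2,α}` boundary: as `HasC2Boundary`, and additionally the second derivative of
the graph function is Hölder continuous of some exponent `α ∈ (0,1]`. -/
def HasC2alphaBoundary (Ω : Set (En n)) : Prop :=
  ∀ p ∈ frontier Ω, ∃ ν : En n, ‖ν‖ = 1 ∧ ∃ r : ℝ, 0 < r ∧
    ∃ φ : ↥((Submodule.span ℝ {ν})ᗮ) → ℝ,
      φ 0 = 0 ∧ fderiv ℝ φ 0 = 0 ∧ ContDiffOn ℝ 2 φ (Metric.ball 0 r) ∧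
      (∃ α C : ℝ≥0, 0 < α ∧ α ≤ 1 ∧
        HolderOnWith C α (fun v => fderiv ℝ (fun z => fderiv ℝ φ z) v) (Metric.ball 0 r)) ∧
      ∀ y ∈ Metric.ball p r,
        (y ∈ Ω ↔ φ ((Submodule.orthogonalProjectionOnto ((Submodule.span ℝ {ν})ᗮ)) (y - p))
            < @inner ℝ _ _ (y - p) ν)

/-- `Ω` is a mean convex domain with `C^{2,α}` boundary: near every boundary point, `Ω` is the
region above the graph of a `C^{2,α}` function `φ` over the tangent hyperplane (`ν` being the
interior unit normal, `Dφ(0) = 0`), with `Δφ(0) ≥ 0`. -/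
def IsMeanConvexC2alphaDomain (Ω : Set (En n)) : Prop :=
  ∀ p ∈ frontier Ω, ∃ ν : En n, ‖ν‖ = 1 ∧ ∃ r : ℝ, 0 < r ∧
    ∃ φ : ↥((Submodule.span ℝ {ν})ᗮ) → ℝ,
      φ 0 = 0 ∧ fderiv ℝ φ 0 = 0 ∧ ContDiffOn ℝ 2 φ (Metric.ball 0 r) ∧
      (∃ α C : ℝ≥0, 0 < α ∧ α ≤ 1 ∧
        HolderOnWith C α (fun v => fderiv ℝ (fun z => fderiv ℝ φ z) v) (Metric.ball 0 r)) ∧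
      (∀ y ∈ Metric.ball p r,
        (y ∈ Ω ↔ φ ((Submodule.orthogonalProjectionOnto ((Submodule.span ℝ {ν})ᗮ)) (y - p))
            < @inner ℝ _ _ (y - p) ν)) ∧
      (∃ b : OrthonormalBasis (Fin (n - 1)) ℝ ↥((Submodule.span ℝ {ν})ᗮ),
        0 ≤ ∑ i, fderiv ℝ (fun z => fderiv ℝ φ z (b i)) 0 (b i))

/-- Gradient with respect to a set (`fderivWithin`), used for derivatives up to the boundary. -/
def DgW (s : Set (En n)) (u : En n → ℝ) (x : En n) : Fin n → ℝ :=
  fun i => fderivWithin ℝ u s x (EuclideanSpace.single i 1)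

end Extras
section DeSitter

variable {n : ℕ}

/-- `w = √(1−|Dv|²)` for a spacelike graph. -/
def wDS (v : En n → ℝ) (x : En n) : ℝ := Real.sqrt (1 - ∑ i, Dg v x i ^ 2)

/-- The matrix `Dv Dvᵀ`. -/
def dyad (v : En n → ℝ) (x : En n) : Matrix (Fin n) (Fin n) ℝ :=
  Matrix.of fun i j => Dg v x i * Dg v x j

/-- Induced (de Sitter) metric of the spacelike graph of `v`. -/
def gDS (v : En n → ℝ) (x : En n) : Matrix (Fin n) (Fin n) ℝ :=
  (v x ^ 2)⁻¹ • (1 - dyad v x)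

/-- Second fundamental form of the spacelike graph of `v`. -/
def hDS (v : En n → ℝ) (x : En n) : Matrix (Fin n) (Fin n) ℝ :=
  (v x ^ 2 * wDS v x)⁻¹ • (1 - dyad v x - v x • Dh v x)

open scoped ComplexOrder in
/-- Port helper: `Matrix.PosSemidef.sqrt` is gone from Mathlib; this is its old definition. -/
def Matrix.PosSemidef.sqrt {𝕜 : Type*} [RCLike 𝕜] {m : Type*} [Fintype m] [DecidableEq m]
    {A : Matrix m m 𝕜} (hA : A.PosSemidef) : Matrix m m 𝕜 :=
  hA.1.eigenvectorUnitary.1 * Matrix.diagonal ((↑) ∘ (√·) ∘ hA.1.eigenvalues) *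
  (star hA.1.eigenvectorUnitary : Matrix m m 𝕜)

open Classical in
/-- `g^{-1/2} h g^{-1/2}`, whose eigenvalues are the de Sitter principal curvatures
of the spacelike graph of `v` (junk value `0` if `g` is not positive semidefinite). -/
def ADS (v : En n → ℝ) (x : En n) : Matrix (Fin n) (Fin n) ℝ :=
  if hg : (gDS v x).PosSemidef then hg.sqrt⁻¹ * hDS v x * hg.sqrt⁻¹ else 0

/-- The normalized `k`-th elementary symmetric function `H_k = e_k / C(n,k)`. -/
def Hk (n k : ℕ) (l : Fin n → ℝ) : ℝ :=
  (∑ s ∈ Finset.powersetCard k (Finset.univ : Finset (Fin n)), ∏ i ∈ s, l i) / (n.choose k)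

end DeSitter
end

/-!
Hyperbolic dilations `y ↦ (1 + t) u ((1 + t)⁻¹ • y)` are isometries of the half-space model of
`ℍⁿ⁺¹`; accordingly the dilated function `u_t` satisfies `A[u_t](x) = A[u]((1 + t)⁻¹ • x)`, so that
`f(κ[u_t]) = σ` near `x`. The `t`-derivative at `t = 0` of the 2-jet of `u_t` at `x` is the 2-jet of
`φ = u - x · Du`, hence `A[u + tφ](x)` and `A[u_t](x)` agree to first order in `t`. Eigenvalues of
symmetric matrices are `1`-Lipschitz for the operator norm (Weyl's inequality) and `f` is locally
Lipschitz, so `f(κ[u + tφ](x)) - σ = o(t)`. The same eigenvalue estimate keeps `A[u + tφ](x)`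
positive definite for small `t`.
-/

noncomputable section
open scoped Matrix.Norms.L2Operator

namespace LinearMap.IsSymmetric
open Module RCLike
open scoped InnerProductSpace

variable {𝕜 E : Type*} [RCLike 𝕜] [NormedAddCommGroup E] [InnerProductSpace 𝕜 E]
  [FiniteDimensional 𝕜 E] {T S : E →ₗ[𝕜] E} {n : ℕ}

lemma re_inner_map_self_eq_sum (hT : T.IsSymmetric) (hn : finrank 𝕜 E = n) (x : E) :
    re ⟪T x, x⟫_𝕜 = ∑ i, hT.eigenvalues hn i * ‖(hT.eigenvectorBasis hn).repr x i‖ ^ 2 := by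
  rw [← (hT.eigenvectorBasis hn).repr.inner_map_map, PiLp.inner_apply, map_sum]
  refine Finset.sum_congr rfl fun i _ => ?_
  rw [eigenvectorBasis_apply_self_apply, ← smul_eq_mul, inner_smul_real_left]
  simp only [inner_self_eq_norm_sq_to_K, smul_re, re_ofReal_pow]

lemma norm_sq_eq_sum (hT : T.IsSymmetric) (hn : finrank 𝕜 E = n) (x : E) :
    ‖x‖ ^ 2 = ∑ i, ‖(hT.eigenvectorBasis hn).repr x i‖ ^ 2 := by
  rw [← (hT.eigenvectorBasis hn).repr.norm_map, EuclideanSpace.norm_sq_eq]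

lemma repr_eq_zero_of_mem_span (hT : T.IsSymmetric) (hn : finrank 𝕜 E = n) {s : Set (Fin n)}
    {x : E} (hx : x ∈ Submodule.span 𝕜 (hT.eigenvectorBasis hn '' s)) {i : Fin n} (hi : i ∉ s) :
    (hT.eigenvectorBasis hn).repr x i = 0 := by
  rw [OrthonormalBasis.repr_apply_apply]
  refine Submodule.span_induction ?_ (inner_zero_right _) (fun y z _ _ hy hz => ?_)
    (fun a y _ hy => ?_) hx
  · rintro _ ⟨j, hj, rfl⟩
    exact (hT.eigenvectorBasis hn).orthonormal.2 (ne_of_mem_of_not_mem hj hi).symm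
  · rw [inner_add_right, hy, hz, add_zero]
  · rw [inner_smul_right, hy, mul_zero]

lemma re_inner_map_self_le_of_mem_span (hT : T.IsSymmetric) (hn : finrank 𝕜 E = n)
    {s : Set (Fin n)} {μ : ℝ} (hμ : ∀ i ∈ s, hT.eigenvalues hn i ≤ μ) {x : E}
    (hx : x ∈ Submodule.span 𝕜 (hT.eigenvectorBasis hn '' s)) :
    re ⟪T x, x⟫_𝕜 ≤ μ * ‖x‖ ^ 2 := by
  rw [re_inner_map_self_eq_sum hT hn, norm_sq_eq_sum hT hn, Finset.mul_sum]
  refine Finset.sum_le_sum fun i _ => ?_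
  by_cases hi : i ∈ s
  · exact mul_le_mul_of_nonneg_right (hμ i hi) (sq_nonneg _)
  · simp [repr_eq_zero_of_mem_span hT hn hx hi]

lemma le_re_inner_map_self_of_mem_span (hT : T.IsSymmetric) (hn : finrank 𝕜 E = n)
    {s : Set (Fin n)} {μ : ℝ} (hμ : ∀ i ∈ s, μ ≤ hT.eigenvalues hn i) {x : E}
    (hx : x ∈ Submodule.span 𝕜 (hT.eigenvectorBasis hn '' s)) :
    μ * ‖x‖ ^ 2 ≤ re ⟪T x, x⟫_𝕜 := by
  rw [re_inner_map_self_eq_sum hT hn, norm_sq_eq_sum hT hn, Finset.mul_sum]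
  refine Finset.sum_le_sum fun i _ => ?_
  by_cases hi : i ∈ s
  · exact mul_le_mul_of_nonneg_right (hμ i hi) (sq_nonneg _)
  · simp [repr_eq_zero_of_mem_span hT hn hx hi]

lemma finrank_span_eigenvectorBasis_image (hT : T.IsSymmetric) (hn : finrank 𝕜 E = n)
    (s : Finset (Fin n)) :
    finrank 𝕜 (Submodule.span 𝕜 (hT.eigenvectorBasis hn '' s)) = s.card := by
  rw [Set.image_eq_range]
  exact (finrank_span_eq_card ((hT.eigenvectorBasis hn).orthonormal.linearIndependent.comp _
    Subtype.val_injective)).trans (Fintype.card_coe s)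

/-- Weyl's inequality. -/
theorem eigenvalues_le_add_of_re_inner_le (hT : T.IsSymmetric) (hS : S.IsSymmetric)
    (hn : finrank 𝕜 E = n) {ε : ℝ} (h : ∀ x, re ⟪T x, x⟫_𝕜 ≤ re ⟪S x, x⟫_𝕜 + ε * ‖x‖ ^ 2)
    (k : Fin n) : hT.eigenvalues hn k ≤ hS.eigenvalues hn k + ε := by
  classical
  set V := Submodule.span 𝕜 (hT.eigenvectorBasis hn '' (Finset.Iic k : Finset (Fin n)))
  set W := Submodule.span 𝕜 (hS.eigenvectorBasis hn '' (Finset.Ici k : Finset (Fin n)))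
  have hV : finrank 𝕜 V = k + 1 := by
    rw [finrank_span_eigenvectorBasis_image, Fin.card_Iic]
  have hW : finrank 𝕜 W = n - k := by
    rw [finrank_span_eigenvectorBasis_image, Fin.card_Ici]
  have hVW : V ⊓ W ≠ ⊥ := by
    intro hbot
    have := Submodule.finrank_sup_add_finrank_inf_eq V W
    have := Submodule.finrank_le (V ⊔ W)
    rw [hbot, finrank_bot] at *
    omega
  obtain ⟨x, ⟨hxV, hxW⟩, hx⟩ := Submodule.exists_mem_ne_zero_of_ne_bot hVW
  have hTx := le_re_inner_map_self_of_mem_span hT hn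
    (fun i hi => hT.eigenvalues_antitone hn (Finset.mem_Iic.mp hi)) hxV
  have hSx := re_inner_map_self_le_of_mem_span hS hn
    (fun i hi => hS.eigenvalues_antitone hn (Finset.mem_Ici.mp hi)) hxW
  have hx2 : 0 < ‖x‖ ^ 2 := by positivity
  nlinarith [h x]

theorem abs_eigenvalues_sub_le (hT : T.IsSymmetric) (hS : S.IsSymmetric) (hn : finrank 𝕜 E = n)
    {ε : ℝ} (h : ∀ x, ‖T x - S x‖ ≤ ε * ‖x‖) (k : Fin n) :
    |hT.eigenvalues hn k - hS.eigenvalues hn k| ≤ ε := by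
  have key : ∀ x, |re ⟪T x, x⟫_𝕜 - re ⟪S x, x⟫_𝕜| ≤ ε * ‖x‖ ^ 2 := fun x =>
    calc |re ⟪T x, x⟫_𝕜 - re ⟪S x, x⟫_𝕜| = |re ⟪T x - S x, x⟫_𝕜| := by
          rw [inner_sub_left, map_sub]
      _ ≤ ‖T x - S x‖ * ‖x‖ := (abs_re_le_norm _).trans (norm_inner_le_norm _ _)
      _ ≤ ε * ‖x‖ * ‖x‖ := by gcongr; exact h x
      _ = ε * ‖x‖ ^ 2 := by ring
  rw [abs_sub_le_iff, sub_le_iff_le_add', sub_le_iff_le_add']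
  exact ⟨eigenvalues_le_add_of_re_inner_le hT hS hn
      (fun x => by linarith [(abs_sub_le_iff.mp (key x)).1]) k,
    eigenvalues_le_add_of_re_inner_le hS hT hn
      (fun x => by linarith [(abs_sub_le_iff.mp (key x)).2]) k⟩

end LinearMap.IsSymmetric

namespace Matrix.IsHermitian

variable {𝕜 ι : Type*} [RCLike 𝕜] [Fintype ι] [DecidableEq ι] {A B : Matrix ι ι 𝕜}

theorem norm_eigenvalues_sub_le (hA : A.IsHermitian) (hB : B.IsHermitian) :
    ‖hA.eigenvalues - hB.eigenvalues‖ ≤ ‖A - B‖ := by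
  -- `hA.eigenvalues` is the sorted spectrum of `toEuclideanLin A`, reindexed by an equivalence
  -- `Fin (card ι) ≃ ι` that does not depend on `A`.
  refine pi_norm_le_iff_of_nonneg (norm_nonneg _) |>.mpr fun i => ?_
  rw [Pi.sub_apply, Real.norm_eq_abs]
  refine LinearMap.IsSymmetric.abs_eigenvalues_sub_le _ _ _ (fun x => ?_) _
  rw [← LinearMap.sub_apply, ← map_sub, ← coe_toEuclideanCLM_eq_toEuclideanLin,
    ← l2_opNorm_toEuclideanCLM]
  exact (toEuclideanCLM (n := ι) (𝕜 := 𝕜) (A - B)).le_opNorm x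

end Matrix.IsHermitian

section HypMatrix

variable {n : ℕ}

lemma Differentiable.matrix_of {F : Type*} [NormedAddCommGroup F] [NormedSpace ℝ F]
    {g : F → Fin n → Fin n → ℝ} (hg : ∀ i j, Differentiable ℝ fun y => g y i j) :
    Differentiable ℝ fun y => Matrix.of (g y) := by
  have h : (fun y => Matrix.of (g y)) = fun y => ∑ i, ∑ j, g y i j • Matrix.single i j (1 : ℝ) := by
    ext y : 1
    rw [Matrix.matrix_eq_sum_single (Matrix.of (g y))]
    simp [Matrix.smul_single]
  rw [h]
  fun_prop

def graphW (p : Fin n → ℝ) : ℝ := √(1 + ∑ i, p i ^ 2)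

def graphGamma (p : Fin n → ℝ) : Matrix (Fin n) (Fin n) ℝ :=
  1 - (graphW p * (1 + graphW p))⁻¹ • Matrix.of fun i j => p i * p j

def hypMatrix (q : ℝ × (Fin n → ℝ) × Matrix (Fin n) (Fin n) ℝ) : Matrix (Fin n) (Fin n) ℝ :=
  (graphW q.2.1)⁻¹ • (1 + q.1 • (graphGamma q.2.1 * q.2.2 * graphGamma q.2.1))

lemma graphW_pos (p : Fin n → ℝ) : 0 < graphW p :=
  Real.sqrt_pos.mpr (by positivity)

lemma hypMatrix_smul {s : ℝ} (hs : s ≠ 0) (a : ℝ) (p : Fin n → ℝ) (C : Matrix (Fin n) (Fin n) ℝ) :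
    hypMatrix (s * a, p, s⁻¹ • C) = hypMatrix (a, p, C) := by
  simp only [hypMatrix, Matrix.mul_smul, Matrix.smul_mul, smul_smul]
  rw [mul_right_comm, mul_inv_cancel₀ hs, one_mul]

lemma isHermitian_graphGamma (p : Fin n → ℝ) : (graphGamma p).IsHermitian := by
  refine Matrix.isHermitian_one.sub (Matrix.IsHermitian.smul ?_ (.all _))
  ext i j
  simp [mul_comm]

lemma isHermitian_hypMatrix {q : ℝ × (Fin n → ℝ) × Matrix (Fin n) (Fin n) ℝ}
    (hC : q.2.2.IsHermitian) : (hypMatrix q).IsHermitian := by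
  have hγ := isHermitian_graphGamma q.2.1
  refine (Matrix.isHermitian_one.add (Matrix.IsHermitian.smul ?_ (.all _))).smul (.all _)
  rw [Matrix.IsHermitian, Matrix.conjTranspose_mul, Matrix.conjTranspose_mul, hγ.eq, hC.eq,
    Matrix.mul_assoc]

lemma differentiable_graphW : Differentiable ℝ (graphW (n := n)) := fun p =>
  DifferentiableAt.sqrt (by fun_prop) (by positivity)

lemma differentiable_hypMatrix : Differentiable ℝ (hypMatrix (n := n)) := by
  have hW : Differentiable ℝ fun q : ℝ × (Fin n → ℝ) × Matrix (Fin n) (Fin n) ℝ => graphW q.2.1 :=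
    differentiable_graphW.comp (by fun_prop)
  have hγ : Differentiable ℝ fun q : ℝ × (Fin n → ℝ) × Matrix (Fin n) (Fin n) ℝ =>
      graphGamma q.2.1 := by
    refine (differentiable_const _).sub (Differentiable.fun_smul ?_ (Differentiable.matrix_of ?_))
    · exact (hW.mul (hW.const_add 1)).inv fun q =>
      (mul_pos (graphW_pos _) (by linarith [graphW_pos q.2.1])).ne'
    · intro i j; fun_prop
  exact (hW.inv fun q => (graphW_pos _).ne').fun_smul ((differentiable_const _).add
    (differentiable_fst.fun_smul ((hγ.mul differentiable_snd.snd).mul hγ)))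

lemma hasDerivAt_hypMatrix_add_smul (a b : ℝ × (Fin n → ℝ) × Matrix (Fin n) (Fin n) ℝ) :
    HasDerivAt (fun t : ℝ => hypMatrix (a + t • b)) (fderiv ℝ hypMatrix a b) 0 := by
  have h : HasDerivAt (fun t : ℝ => a + t • b) b 0 := by
    simpa using ((hasDerivAt_id (0 : ℝ)).smul_const b).const_add a
  exact (differentiable_hypMatrix a).hasFDerivAt.comp_hasDerivAt_of_eq 0 h (by simp)

end HypMatrix

section EulerDefect

variable {E F : Type*} [NormedAddCommGroup E] [NormedSpace ℝ E] [NormedAddCommGroup F]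
  [NormedSpace ℝ F] {u v : E → ℝ} {x : E}

lemma ContDiffAt.differentiableAt_fderiv {f : E → F} (hf : ContDiffAt ℝ 2 f x) :
    DifferentiableAt ℝ (fderiv ℝ f) x :=
  (hf.fderiv_right (m := 1) le_rfl).differentiableAt one_ne_zero

lemma fderiv_fderiv_add_mul (hu : ContDiffAt ℝ 2 u x) (hv : ContDiffAt ℝ 2 v x) (t : ℝ) :
    fderiv ℝ (fderiv ℝ fun y => u y + t * v y) x =
      fderiv ℝ (fderiv ℝ u) x + t • fderiv ℝ (fderiv ℝ v) x := by
  have hD : fderiv ℝ (fun y => u y + t * v y) =ᶠ[𝓝 x] fun y => fderiv ℝ u y + t • fderiv ℝ v y := by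
    filter_upwards [hu.eventually (by simp), hv.eventually (by simp)] with y huy hvy
    exact ((huy.differentiableAt two_ne_zero).hasFDerivAt.add
      ((hvy.differentiableAt two_ne_zero).hasFDerivAt.const_mul t)).fderiv
  rw [hD.fderiv_eq]
  exact (hu.differentiableAt_fderiv.hasFDerivAt.add
    (hv.differentiableAt_fderiv.hasFDerivAt.const_smul t)).fderiv

def eulerDefect (u : E → ℝ) (y : E) : ℝ := u y - fderiv ℝ u y y

lemma contDiffAt_eulerDefect {m : WithTop ℕ∞} (hu : ContDiffAt ℝ (m + 1) u x) :
    ContDiffAt ℝ m (eulerDefect u) x :=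
  (hu.of_le le_self_add).sub ((hu.fderiv_right le_rfl).clm_apply contDiffAt_id)

lemma hasFDerivAt_eulerDefect (hu : ContDiffAt ℝ 2 u x) :
    HasFDerivAt (eulerDefect u) (-fderiv ℝ (fderiv ℝ u) x x) x := by
  have h : HasFDerivAt (fun y => u y - fderiv ℝ u y y) _ x :=
    (hu.differentiableAt two_ne_zero).hasFDerivAt.sub
      (hu.differentiableAt_fderiv.hasFDerivAt.clm_apply (hasFDerivAt_id x))
  refine h.congr_fderiv ?_
  ext w
  simp [(hu.isSymmSndFDerivAt (by simp)).eq x w]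

lemma fderiv_fderiv_eulerDefect (hu : ContDiffAt ℝ 3 u x) :
    fderiv ℝ (fderiv ℝ (eulerDefect u)) x =
      -(fderiv ℝ (fderiv ℝ u) x + fderiv ℝ (fderiv ℝ (fderiv ℝ u)) x x) := by
  have hDu : ContDiffAt ℝ 2 (fderiv ℝ u) x := hu.fderiv_right (by norm_num)
  have hD : fderiv ℝ (eulerDefect u) =ᶠ[𝓝 x] fun y => -fderiv ℝ (fderiv ℝ u) y y := by
    filter_upwards [hu.eventually (by simp)] with y hy
    exact (hasFDerivAt_eulerDefect (hy.of_le (by norm_num))).fderiv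
  have h : HasFDerivAt (fun y => -fderiv ℝ (fderiv ℝ u) y y) _ x :=
    (hDu.differentiableAt_fderiv.hasFDerivAt.clm_apply (hasFDerivAt_id x)).neg
  rw [hD.fderiv_eq, h.fderiv]
  ext v w
  simp [(hDu.isSymmSndFDerivAt (by simp)).eq x v]

-- The lemmas below differentiate at `t = 0` the value, the first and the second derivative at `x`
-- of the hyperbolic dilation `y ↦ (1 + t) u ((1 + t)⁻¹ • y)`.

lemma hasDerivAt_inv_one_add_smul : HasDerivAt (fun t : ℝ => (1 + t)⁻¹ • x) (-x) 0 := by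
  simpa using (((hasDerivAt_id (0 : ℝ)).const_add 1).fun_inv (by norm_num)).smul_const x

lemma tendsto_inv_one_add_smul : Tendsto (fun t : ℝ => (1 + t)⁻¹ • x) (𝓝 0) (𝓝 x) := by
  simpa using (hasDerivAt_inv_one_add_smul (x := x)).continuousAt.tendsto

lemma HasFDerivAt.comp_inv_one_add_smul {g : E → F} {g' : E →L[ℝ] F} (hg : HasFDerivAt g g' x) :
    HasDerivAt (fun t : ℝ => g ((1 + t)⁻¹ • x)) (-g' x) 0 := by
  have h := hg.comp_hasDerivAt_of_eq (0 : ℝ) hasDerivAt_inv_one_add_smul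
    (by simp : x = (1 + (0 : ℝ))⁻¹ • x)
  rwa [map_neg] at h

lemma hasDerivAt_dilation (hu : DifferentiableAt ℝ u x) :
    HasDerivAt (fun t : ℝ => (1 + t) * u ((1 + t)⁻¹ • x)) (eulerDefect u x) 0 := by
  refine (((hasDerivAt_id (0 : ℝ)).const_add 1).mul
    hu.hasFDerivAt.comp_inv_one_add_smul).congr_deriv ?_
  simp [eulerDefect, sub_eq_add_neg]

lemma hasDerivAt_fderiv_dilation (hu : ContDiffAt ℝ 2 u x) :
    HasDerivAt (fun t : ℝ => fderiv ℝ u ((1 + t)⁻¹ • x)) (fderiv ℝ (eulerDefect u) x) 0 := by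
  rw [(hasFDerivAt_eulerDefect hu).fderiv]
  exact hu.differentiableAt_fderiv.hasFDerivAt.comp_inv_one_add_smul

lemma hasDerivAt_fderiv_fderiv_dilation (hu : ContDiffAt ℝ 3 u x) :
    HasDerivAt (fun t : ℝ => (1 + t)⁻¹ • fderiv ℝ (fderiv ℝ u) ((1 + t)⁻¹ • x))
      (fderiv ℝ (fderiv ℝ (eulerDefect u)) x) 0 := by
  have hDu : ContDiffAt ℝ 2 (fderiv ℝ u) x := hu.fderiv_right (by norm_num)
  rw [fderiv_fderiv_eulerDefect hu]
  refine ((((hasDerivAt_id (0 : ℝ)).const_add 1).fun_inv (by norm_num)).smul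
    hDu.differentiableAt_fderiv.hasFDerivAt.comp_inv_one_add_smul).congr_deriv ?_
  simp [add_comm]

end EulerDefect

section Lipschitz

open Asymptotics

theorem LipschitzOnWith.hasDerivAt_comp_zero_of_tangent {E F : Type*} [NormedAddCommGroup E]
    [NormedSpace ℝ E] [NormedAddCommGroup F] [NormedSpace ℝ F] {g : E → F} {s : Set E} {K : ℝ≥0}
    (hg : LipschitzOnWith K g s) {P Q : ℝ → E} {v : E} {a : ℝ} (hP : HasDerivAt P v a)
    (hQ : HasDerivAt Q v a) (hPQ : P a = Q a) (hPs : ∀ᶠ t in 𝓝 a, P t ∈ s)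
    (hQs : ∀ᶠ t in 𝓝 a, Q t ∈ s) (hgQ : ∀ᶠ t in 𝓝 a, g (Q t) = g (Q a)) :
    HasDerivAt (fun t => g (P t)) 0 a := by
  have hsub : (fun t => P t - Q t) =o[𝓝 a] fun t => t - a := by
    simpa [hPQ] using hasDerivAt_iff_isLittleO.mp (hP.sub hQ)
  have hbound : (fun t => g (P t) - g (P a)) =O[𝓝 a] fun t => P t - Q t := by
    refine isBigO_iff.mpr ⟨K, ?_⟩
    filter_upwards [hPs, hQs, hgQ] with t hPt hQt hgt
    rw [hPQ, ← hgt, ← dist_eq_norm, ← dist_eq_norm]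
    exact hg.dist_le_mul _ hPt _ hQt
  simpa [hasDerivAt_iff_isLittleO] using hbound.trans_isLittleO hsub

end Lipschitz

variable {n : ℕ}

section Eigenvalues

lemma isOpen_posCone : IsOpen (posCone n) := by
  change IsOpen {l : Fin n → ℝ | ∀ i, 0 < l i}
  simpa only [Set.pi, Set.mem_univ, true_implies, Set.mem_Ioi] using
    isOpen_set_pi Set.finite_univ fun (_ : Fin n) _ => isOpen_Ioi

lemma eigenvals_of_isHermitian {A : Matrix (Fin n) (Fin n) ℝ} (hA : A.IsHermitian) :
    eigenvals A = hA.eigenvalues :=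
  dif_pos hA

lemma lipschitzOnWith_eigenvals :
    LipschitzOnWith 1 (eigenvals (n := n)) {A | A.IsHermitian} :=
  LipschitzOnWith.of_dist_le_mul fun A hA B hB => by
    rw [eigenvals_of_isHermitian hA, eigenvals_of_isHermitian hB, dist_eq_norm, dist_eq_norm,
      NNReal.coe_one, one_mul]
    exact hA.norm_eigenvalues_sub_le hB

lemma tendsto_eigenvals_of_tendsto {α : Type*} {l : Filter α} {M : α → Matrix (Fin n) (Fin n) ℝ}
    {M₀ : Matrix (Fin n) (Fin n) ℝ} (hM : Tendsto M l (𝓝 M₀)) (hH : ∀ᶠ a in l, (M a).IsHermitian)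
    (hH₀ : M₀.IsHermitian) : Tendsto (fun a => eigenvals (M a)) l (𝓝 (eigenvals M₀)) :=
  (lipschitzOnWith_eigenvals.continuousOn M₀ hH₀).tendsto.comp
    (tendsto_nhdsWithin_iff.mpr ⟨hM, hH⟩)

lemma eventually_posDef_of_tendsto {α : Type*} {l : Filter α}
    {M : α → Matrix (Fin n) (Fin n) ℝ} {M₀ : Matrix (Fin n) (Fin n) ℝ} (hM : Tendsto M l (𝓝 M₀))
    (hH : ∀ᶠ a in l, (M a).IsHermitian) (hM₀ : M₀.PosDef) : ∀ᶠ a in l, (M a).PosDef := by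
  have hpos : ∀ᶠ a in l, ∀ i, 0 < eigenvals (M a) i :=
    (tendsto_eigenvals_of_tendsto hM hH hM₀.isHermitian).eventually
      (isOpen_posCone.mem_nhds fun i => by
        rw [eigenvals_of_isHermitian hM₀.isHermitian]; exact hM₀.eigenvalues_pos i)
  filter_upwards [hH, hpos] with a ha hposa
  rw [eigenvals_of_isHermitian ha] at hposa
  exact ha.posDef_iff_eigenvalues_pos.mpr hposa

lemma eventually_mem_inter_eigenvals_preimage {α : Type*} {l : Filter α}
    {M : α → Matrix (Fin n) (Fin n) ℝ} {M₀ : Matrix (Fin n) (Fin n) ℝ} (hM : Tendsto M l (𝓝 M₀))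
    (hH : ∀ᶠ a in l, (M a).IsHermitian) (hH₀ : M₀.IsHermitian) {s : Set (Fin n → ℝ)}
    (hs : s ∈ 𝓝 (eigenvals M₀)) : ∀ᶠ a in l, M a ∈ {A | A.IsHermitian} ∩ eigenvals ⁻¹' s :=
  hH.and ((tendsto_eigenvals_of_tendsto hM hH hH₀).eventually hs)

end Eigenvalues

section Coordinates

def gradCoords : (En n →L[ℝ] ℝ) →L[ℝ] (Fin n → ℝ) :=
  ContinuousLinearMap.pi fun i => ContinuousLinearMap.apply ℝ ℝ (EuclideanSpace.single i 1)

def hessCoords : (En n →L[ℝ] En n →L[ℝ] ℝ) →L[ℝ] Matrix (Fin n) (Fin n) ℝ :=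
  LinearMap.toContinuousLinearMap
    { toFun := fun B : En n →L[ℝ] En n →L[ℝ] ℝ =>
        Matrix.of fun i j => B (EuclideanSpace.single i 1) (EuclideanSpace.single j 1)
      map_add' := fun _ _ => rfl
      map_smul' := fun _ _ => rfl }

@[simp]
lemma hessCoords_apply (B : En n →L[ℝ] En n →L[ℝ] ℝ) (i j : Fin n) :
    hessCoords B i j = B (EuclideanSpace.single i 1) (EuclideanSpace.single j 1) := rfl

lemma Dg_eq_gradCoords (u : En n → ℝ) (x : En n) : Dg u x = gradCoords (fderiv ℝ u x) := rfl

lemma Dh_eq_hessCoords {u : En n → ℝ} {x : En n} (hu : DifferentiableAt ℝ (fderiv ℝ u) x) :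
    Dh u x = hessCoords (fderiv ℝ (fderiv ℝ u) x) := by
  ext i j
  simp [Dh, fderiv_clm_apply hu (differentiableAt_const _)]

lemma sum_mul_Dg (u : En n → ℝ) (y : En n) : ∑ i, y i * Dg u y i = fderiv ℝ u y y := by
  have h (L : En n →L[ℝ] ℝ) : L y = ∑ i, y i * L (EuclideanSpace.single i 1) := by
    conv_lhs => rw [← (EuclideanSpace.basisFun (Fin n) ℝ).sum_repr y]
    simp [map_sum]
  exact (h _).symm

def jetCoords (u : En n → ℝ) (x : En n) : ℝ × (Fin n → ℝ) × Matrix (Fin n) (Fin n) ℝ :=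
  (u x, Dg u x, Dh u x)

lemma hypA_eq_hypMatrix (u : En n → ℝ) (x : En n) : hypA u x = hypMatrix (jetCoords u x) := rfl

lemma isHermitian_hypA {u : En n → ℝ} {x : En n} (hu : ContDiffAt ℝ 2 u x) :
    (hypA u x).IsHermitian := by
  have hD : (Dh u x).IsHermitian := by
    rw [Dh_eq_hessCoords hu.differentiableAt_fderiv]
    ext i j
    exact (hu.isSymmSndFDerivAt (by simp)).eq _ _
  rw [hypA_eq_hypMatrix]
  exact isHermitian_hypMatrix hD

end Coordinates

section Kernel

variable {u : En n → ℝ} {x : En n}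

lemma jetCoords_add_mul {v : En n → ℝ} (hu : ContDiffAt ℝ 2 u x) (hv : ContDiffAt ℝ 2 v x)
    (t : ℝ) : jetCoords (fun y => u y + t * v y) x = jetCoords u x + t • jetCoords v x := by
  have hD : fderiv ℝ (fun y => u y + t * v y) x = fderiv ℝ u x + t • fderiv ℝ v x :=
    ((hu.differentiableAt two_ne_zero).hasFDerivAt.add
      ((hv.differentiableAt two_ne_zero).hasFDerivAt.const_mul t)).fderiv
  have huv : ContDiffAt ℝ 2 (fun y => u y + t * v y) x := hu.add (contDiffAt_const.mul hv)
  simp only [jetCoords, Dg_eq_gradCoords, Dh_eq_hessCoords hu.differentiableAt_fderiv,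
    Dh_eq_hessCoords hv.differentiableAt_fderiv, Dh_eq_hessCoords huv.differentiableAt_fderiv,
    hD, fderiv_fderiv_add_mul hu hv, map_add, map_smul, Prod.smul_mk, Prod.mk_add_mk, smul_eq_mul]

lemma contDiffAt_add_mul_eulerDefect (hu : ContDiffAt ℝ 3 u x) (t : ℝ) :
    ContDiffAt ℝ 2 (fun y => u y + t * eulerDefect u y) x :=
  (hu.of_le (by norm_num)).add (contDiffAt_const.mul (contDiffAt_eulerDefect hu))

lemma hypA_add_mul_eulerDefect (hu : ContDiffAt ℝ 3 u x) (t : ℝ) :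
    hypA (fun y => u y + t * eulerDefect u y) x =
      hypMatrix (jetCoords u x + t • jetCoords (eulerDefect u) x) := by
  rw [hypA_eq_hypMatrix, jetCoords_add_mul (hu.of_le (by norm_num)) (contDiffAt_eulerDefect hu)]

/-- Coordinates of the 2-jet at `x` of the hyperbolic dilation `y ↦ (1 + t) u ((1 + t)⁻¹ • y)`. -/
def dilationJetCoords (u : En n → ℝ) (x : En n) (t : ℝ) :
    ℝ × (Fin n → ℝ) × Matrix (Fin n) (Fin n) ℝ :=
  ((1 + t) * u ((1 + t)⁻¹ • x), Dg u ((1 + t)⁻¹ • x), (1 + t)⁻¹ • Dh u ((1 + t)⁻¹ • x))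

lemma hypMatrix_dilationJetCoords {t : ℝ} (ht : 1 + t ≠ 0) :
    hypMatrix (dilationJetCoords u x t) = hypA u ((1 + t)⁻¹ • x) :=
  hypMatrix_smul ht _ _ _

lemma dilationJetCoords_zero : dilationJetCoords u x 0 = jetCoords u x := by
  simp [dilationJetCoords, jetCoords]

lemma hasDerivAt_dilationJetCoords (hu : ContDiffAt ℝ 3 u x) :
    HasDerivAt (dilationJetCoords u x) (jetCoords (eulerDefect u) x) 0 := by
  have hφ : ContDiffAt ℝ 2 (eulerDefect u) x := contDiffAt_eulerDefect hu
  have hDh : (fun t : ℝ => hessCoords ((1 + t)⁻¹ • fderiv ℝ (fderiv ℝ u) ((1 + t)⁻¹ • x))) =ᶠ[𝓝 0]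
      fun t : ℝ => (1 + t)⁻¹ • Dh u ((1 + t)⁻¹ • x) := by
    filter_upwards [tendsto_inv_one_add_smul.eventually (hu.eventually (by simp))] with t ht
    rw [Dh_eq_hessCoords (ht.of_le (by norm_num)).differentiableAt_fderiv, map_smul]
  have h1 : HasDerivAt (fun t : ℝ => Dg u ((1 + t)⁻¹ • x)) (Dg (eulerDefect u) x) 0 :=
    HasFDerivAt.comp_hasDerivAt (F := En n →L[ℝ] ℝ) (0 : ℝ) gradCoords.hasFDerivAt
      (hasDerivAt_fderiv_dilation (hu.of_le (by norm_num)))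
  have h2 : HasDerivAt (fun t : ℝ => (1 + t)⁻¹ • Dh u ((1 + t)⁻¹ • x))
      (Dh (eulerDefect u) x) 0 := by
    have h := HasFDerivAt.comp_hasDerivAt (F := En n →L[ℝ] En n →L[ℝ] ℝ) (0 : ℝ)
      hessCoords.hasFDerivAt (hasDerivAt_fderiv_fderiv_dilation hu)
    rw [Dh_eq_hessCoords hφ.differentiableAt_fderiv]
    exact h.congr_of_eventuallyEq hDh.symm
  exact (hasDerivAt_dilation (hu.differentiableAt (by simp))).prodMk (h1.prodMk h2)

lemma eventually_hypMatrix_dilationJetCoords (hu : ContDiffAt ℝ 2 u x) :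
    ∀ᶠ t in 𝓝 (0 : ℝ), hypMatrix (dilationJetCoords u x t) = hypA u ((1 + t)⁻¹ • x) ∧
      (hypA u ((1 + t)⁻¹ • x)).IsHermitian := by
  have hne : ∀ᶠ t in 𝓝 (0 : ℝ), 1 + t ≠ 0 :=
    (continuous_const.add continuous_id).continuousAt.eventually_ne (by norm_num)
  filter_upwards [hne, tendsto_inv_one_add_smul.eventually (hu.eventually (by simp))]
    with t ht hzt
  exact ⟨hypMatrix_dilationJetCoords ht, isHermitian_hypA hzt⟩

lemma isHermitian_hypMatrix_add_smul_eulerDefect (hu : ContDiffAt ℝ 3 u x) (t : ℝ) :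
    (hypMatrix (jetCoords u x + t • jetCoords (eulerDefect u) x)).IsHermitian :=
  hypA_add_mul_eulerDefect hu t ▸ isHermitian_hypA (contDiffAt_add_mul_eulerDefect hu t)

theorem eventually_posDef_hypA_add_eulerDefect (hu : ContDiffAt ℝ 3 u x)
    (hpd : (hypA u x).PosDef) :
    ∀ᶠ t in 𝓝 0, (hypA (fun y => u y + t * eulerDefect u y) x).PosDef := by
  simp_rw [hypA_add_mul_eulerDefect hu]
  refine eventually_posDef_of_tendsto (hasDerivAt_hypMatrix_add_smul _ _).continuousAt.tendsto
    (.of_forall (isHermitian_hypMatrix_add_smul_eulerDefect hu)) ?_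
  rwa [zero_smul, add_zero]

theorem hasDerivAt_curvature_hypA_add_eulerDefect {f : (Fin n → ℝ) → ℝ}
    (hu : ContDiffAt ℝ 3 u x) (hf : ContDiffAt ℝ 1 f (eigenvals (hypA u x)))
    (hconst : ∀ᶠ y in 𝓝 x, f (eigenvals (hypA u y)) = f (eigenvals (hypA u x))) :
    HasDerivAt (fun t : ℝ => f (eigenvals (hypA (fun y => u y + t * eulerDefect u y) x))) 0 0 := by
  obtain ⟨K, s, hs, hfs⟩ := hf.exists_lipschitzOnWith
  have hg : LipschitzOnWith (K * 1) (fun A => f (eigenvals A))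
      ({A | A.IsHermitian} ∩ eigenvals ⁻¹' s) :=
    hfs.comp (lipschitzOnWith_eigenvals.mono Set.inter_subset_left) fun _ hA => hA.2
  have hH₀ : (hypA u x).IsHermitian := isHermitian_hypA (hu.of_le (by norm_num))
  have hP := hasDerivAt_hypMatrix_add_smul (jetCoords u x) (jetCoords (eulerDefect u) x)
  have hP₀ : hypMatrix (jetCoords u x + (0 : ℝ) • jetCoords (eulerDefect u) x) = hypA u x := by
    rw [zero_smul, add_zero, hypA_eq_hypMatrix]
  -- Dilating `u` keeps `f(κ)` constant and moves its jet at `x` with the same velocity as `hP`.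
  have hQ : HasDerivAt (fun t => hypMatrix (dilationJetCoords u x t))
      (fderiv ℝ hypMatrix (jetCoords u x) (jetCoords (eulerDefect u) x)) 0 :=
    (differentiable_hypMatrix _).hasFDerivAt.comp_hasDerivAt_of_eq 0
      (hasDerivAt_dilationJetCoords hu) dilationJetCoords_zero.symm
  have hQ₀ : hypMatrix (dilationJetCoords u x 0) = hypA u x := by
    rw [dilationJetCoords_zero, hypA_eq_hypMatrix]
  have hdil : ∀ᶠ t in 𝓝 (0 : ℝ), (hypMatrix (dilationJetCoords u x t)).IsHermitian ∧
      f (eigenvals (hypMatrix (dilationJetCoords u x t))) = f (eigenvals (hypA u x)) := by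
    filter_upwards [eventually_hypMatrix_dilationJetCoords (hu.of_le (by norm_num)),
      tendsto_inv_one_add_smul.eventually hconst] with t ht hft
    rw [ht.1]
    exact ⟨ht.2, hft⟩
  simp_rw [hypA_add_mul_eulerDefect hu]
  refine LipschitzOnWith.hasDerivAt_comp_zero_of_tangent hg hP hQ (hP₀.trans hQ₀.symm) ?_ ?_ ?_
  · refine eventually_mem_inter_eigenvals_preimage hP.continuousAt.tendsto
      (.of_forall (isHermitian_hypMatrix_add_smul_eulerDefect hu)) ?_ ?_
    · exact isHermitian_hypMatrix_add_smul_eulerDefect hu 0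
    · rwa [hP₀]
  · refine eventually_mem_inter_eigenvals_preimage hQ.continuousAt.tendsto
      (hdil.mono fun _ h => h.1) (hQ₀ ▸ hH₀) (by rwa [hQ₀])
  · filter_upwards [hdil] with t ht
    rw [ht.2, hQ₀]

end Kernel

end

theorem stmt_10_general (n : ℕ)
    (f : (Fin n → ℝ) → ℝ) (hf : IsCurvatureFunction n f)
    (Ω : Set (En n)) (hΩo : IsOpen Ω)
    (σ : ℝ) (u : En n → ℝ) (hu : ContDiffOn ℝ (⊤ : ℕ∞) u Ω)
    (hupos : ∀ x ∈ Ω, 0 < u x) (hupd : ∀ x ∈ Ω, (hypA u x).PosDef)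
    (hueq : ∀ x ∈ Ω, f (eigenvals (hypA u x)) = σ) :
    ∀ x ∈ Ω, ∃ δ > (0 : ℝ),
      (∀ t : ℝ, |t| < δ →
        0 < u x + t * (u x - ∑ i, x i * Dg u x i) ∧
        (hypA (fun y => u y + t * (u y - ∑ i, y i * Dg u y i)) x).PosDef) ∧
      HasDerivAt (fun t : ℝ =>
        f (eigenvals (hypA (fun y => u y + t * (u y - ∑ i, y i * Dg u y i)) x))) 0 0 := by
  intro x hx
  have hu3 : ContDiffAt ℝ 3 u x := (hu.contDiffAt (hΩo.mem_nhds hx)).of_le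
    (WithTop.coe_le_coe.mpr le_top)
  have hκ : eigenvals (hypA u x) ∈ posCone n := by
    rw [eigenvals_of_isHermitian (hupd x hx).isHermitian]
    exact (hupd x hx).eigenvalues_pos
  have hf1 : ContDiffAt ℝ 1 f (eigenvals (hypA u x)) :=
    (hf.smooth.contDiffAt (isOpen_posCone.mem_nhds hκ)).of_le
      (WithTop.coe_le_coe.mpr le_top)
  have hconst : ∀ᶠ y in 𝓝 x, f (eigenvals (hypA u y)) = f (eigenvals (hypA u x)) := by
    filter_upwards [hΩo.mem_nhds hx] with y hy
    rw [hueq y hy, hueq x hx]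
  have hpos : ∀ᶠ t in 𝓝 (0 : ℝ), 0 < u x + t * eulerDefect u x :=
    continuousAt_const.eventually_lt (by fun_prop) (by simpa using hupos x hx)
  obtain ⟨δ, hδ, hball⟩ := Metric.eventually_nhds_iff.mp
    (hpos.and (eventually_posDef_hypA_add_eulerDefect hu3 (hupd x hx)))
  have hφ (y : En n) : u y - ∑ i, y i * Dg u y i = eulerDefect u y := by rw [sum_mul_Dg]; rfl
  simp only [hφ]
  exact ⟨δ, hδ, fun t ht => hball (by simpa using ht),
    hasDerivAt_curvature_hypA_add_eulerDefect hu3 hf1 hconst⟩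

/-- **Lemma 6.1**: for a locally strictly convex solution of `f(κ[u]) = σ`, the function
`φ = u − x·Du` lies in the kernel of the linearized operator: at every `x ∈ Ω` the map
`t ↦ f(κ[u + tφ](x))` is defined near `t = 0` (positivity and local strict convexity persist)
and has vanishing derivative at `t = 0`. -/
theorem stmt_10 (n : ℕ) (hn : 2 ≤ n)
    (f : (Fin n → ℝ) → ℝ) (hf : IsCurvatureFunction n f)
    (Ω : Set (En n)) (hΩo : IsOpen Ω) (hΩconn : IsConnected Ω)
    (σ : ℝ) (u : En n → ℝ) (hu : ContDiffOn ℝ (⊤ : ℕ∞) u Ω)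
    (hupos : ∀ x ∈ Ω, 0 < u x) (hupd : ∀ x ∈ Ω, (hypA u x).PosDef)
    (hueq : ∀ x ∈ Ω, f (eigenvals (hypA u x)) = σ) :
    ∀ x ∈ Ω, ∃ δ > (0 : ℝ),
      (∀ t : ℝ, |t| < δ →
        0 < u x + t * (u x - ∑ i, x i * Dg u x i) ∧
        (hypA (fun y => u y + t * (u y - ∑ i, y i * Dg u y i)) x).PosDef) ∧
      HasDerivAt (fun t : ℝ =>
        f (eigenvals (hypA (fun y => u y + t * (u y - ∑ i, y i * Dg u y i)) x))) 0 0 :=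
  stmt_10_general n f hf Ω hΩo σ u hu hupos hupd hueq
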